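/- arXiv:2411.18439 — 2 statements merged into one kernel-verified Lean document; each statement's English description precedes it below -/
import Mathlib

section
/- Let ψ: ℕ → [0,1/2) be a function such that q·ψ(q) is non-increasing and tends to zero as q → ∞, and assume that the limit λ := lim_{q→∞} (−log ψ(q))/(log q) exists (as a finite real number). For x₁ ∈ Exact(1,ψ), let W(x₁,1,ψ) := {x₂ ∈ [0,1] : (x₁,x₂) ∈ Exact(2,ψ)}. Then for every x₁ ∈ Exact(1,ψ), the Hausdorff dimension of W(x₁,1,ψ) is at least 1/(λ+1). -/
open Set Filter MeasureTheory

/-- Distance from `x` to the nearest integer. -/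
noncomputable def nint (x : ℝ) : ℝ := ⨅ m : ℤ, |x - (m : ℝ)|

/-- The `ψ`-simultaneously-well approximable set `W(n, ψ)`. -/
def Wset (n : ℕ) (ψ : ℕ → ℝ) : Set (Fin n → ℝ) :=
  {x | (∀ i, x i ∈ Set.Icc (0 : ℝ) 1) ∧
    {q : ℕ | ∀ i, nint (q * x i) < ψ q}.Infinite}

/-- The exact `ψ`-simultaneously-well approximable set `Exact(n, ψ)`. -/
def ExactSet (n : ℕ) (ψ : ℕ → ℝ) : Set (Fin n → ℝ) :=
  Wset n ψ \ ⋃ c ∈ Set.Ioo (0 : ℝ) 1, Wset n (fun q => c * ψ q)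

/-!
If `x₁ ∉ W(1, cψ)`, then no `(x₁, x₂)` lies in `W(2, cψ)`; so `(x₁, x₂) ∈ Exact(2, ψ)` as soon as
`‖q x₂‖ < ψ(q)` for infinitely many of the denominators `q` with `‖q x₁‖ < ψ(q)`.

Along a fast-growing sequence `q k` of such denominators we build a Cantor set of such `x₂`:
an interval of length `≈ ρ k` contains `M k ≈ q k ρ k / 2` fractions `m / q k`, and around each
of them we keep an interval of length `≈ ρ (k + 1) = ψ(q k) / (2 q k)`. Since `ψ(q) ≥ q ^ (-τ)`
for every `τ > λ`, each `q k` can be chosen so large that `ρ k ^ r ≤ M k ρ (k + 1) ^ r` for a given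
`r < 1 / (λ + 1)`. Reading the digits of a point of the Cantor set as a mixed-radix expansion in
the bases `M k` is then an `r`-Hölder map onto `[0, 1)`, so the Cantor set has dimension `≥ r`.
-/

open scoped NNReal ENNReal

lemma nint_nonneg (x : ℝ) : 0 ≤ nint x :=
  le_ciInf fun _ => abs_nonneg _

lemma nint_le (x : ℝ) (m : ℤ) : nint x ≤ |x - m| :=
  ciInf_le ⟨0, by rintro _ ⟨n, rfl⟩; exact abs_nonneg _⟩ m

lemma cons_mem_exactSet_two {ψ : ℕ → ℝ} {x₁ x₂ : ℝ} (hx₁ : ![x₁] ∈ ExactSet 1 ψ)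
    (hx₂ : x₂ ∈ Icc (0 : ℝ) 1)
    (hinf : {q : ℕ | nint (q * x₁) < ψ q ∧ nint (q * x₂) < ψ q}.Infinite) :
    ![x₁, x₂] ∈ ExactSet 2 ψ := by
  obtain ⟨⟨hx₁Icc, -⟩, hx₁exact⟩ := hx₁
  refine ⟨⟨fun i => ?_, hinf.mono fun q hq i => ?_⟩, fun hW => hx₁exact ?_⟩
  · fin_cases i
    exacts [hx₁Icc 0, hx₂]
  · fin_cases i
    exacts [hq.1, hq.2]
  simp only [mem_iUnion₂] at hW ⊢
  obtain ⟨c, hc, -, hWinf⟩ := hW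
  exact ⟨c, hc, hx₁Icc, hWinf.mono fun q (hq : ∀ i, _) i => by fin_cases i; exact hq 0⟩

theorem dimH_image_le_of_edist_le {α X Y : Type*} [EMetricSpace X] [EMetricSpace Y]
    {f : α → X} {g : α → Y} {s : Set α} {C r : ℝ≥0} (hr : 0 < r)
    (h : ∀ a ∈ s, ∀ b ∈ s, edist (g a) (g b) ≤ C * edist (f a) (f b) ^ (r : ℝ)) :
    dimH (g '' s) ≤ dimH (f '' s) / r := by
  rcases s.eq_empty_or_nonempty with rfl | ⟨a₀, -⟩
  · simp
  have : Nonempty α := ⟨a₀⟩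
  have hg : ∀ a ∈ s, g (Function.invFunOn f s (f a)) = g a := fun a ha => by
    have h' := h _ (Function.invFunOn_apply_mem (f := f) ha) a ha
    rwa [Function.invFunOn_apply_eq (f := f) ha, edist_self,
      ENNReal.zero_rpow_of_pos (by exact_mod_cast hr), mul_zero, nonpos_iff_eq_zero,
      edist_eq_zero] at h'
  have hF : HolderOnWith C r (g ∘ Function.invFunOn f s) (f '' s) := by
    rintro _ ⟨a, ha, rfl⟩ _ ⟨b, hb, rfl⟩
    simpa only [Function.comp_apply, hg a ha, hg b hb] using h a ha b hb
  calc dimH (g '' s) = dimH ((g ∘ Function.invFunOn f s) '' (f '' s)) := by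
        rw [image_image]; exact congrArg dimH (image_congr fun a ha => (hg a ha).symm)
    _ ≤ dimH (f '' s) / r := hF.dimH_image_le hr

theorem exists_seq_of_forall_exists {α β : Type*} {p : α → Prop} {P : α → β → Prop}
    {g : β → α} (h : ∀ x, p x → ∃ y, P x y ∧ p (g y)) {x₀ : α} (hx₀ : p x₀) :
    ∃ (y : ℕ → β) (x : ℕ → α), x 0 = x₀ ∧
      ∀ k, P (x k) (y k) ∧ x (k + 1) = g (y k) := by
  choose next hnext using fun x : Subtype p => h x x.2
  let step : Subtype p → Subtype p := fun x => ⟨g (next x), (hnext x).2⟩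
  refine ⟨fun k => next (step^[k] ⟨x₀, hx₀⟩), fun k => step^[k] ⟨x₀, hx₀⟩, rfl,
    fun k => ⟨(hnext _).1, ?_⟩⟩
  exact congrArg Subtype.val (Function.iterate_succ_apply' step k _)

section MixedRadix

variable (M : ℕ → ℕ)

def admissibleDigits : Set (ℕ → ℕ) := univ.pi fun k => Iio (M k)

noncomputable def mixedRadixWeight (k : ℕ) : ℝ := (∏ j ∈ Finset.range k, (M j : ℝ))⁻¹

noncomputable def mixedRadixPartial (a : ℕ → ℕ) (k : ℕ) : ℝ :=
  ∑ j ∈ Finset.range k, a j * mixedRadixWeight M (j + 1)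

noncomputable def mixedRadixValue (a : ℕ → ℕ) : ℝ := ⨆ k, mixedRadixPartial M a k

noncomputable def mixedRadixRem (y : ℝ) : ℕ → ℝ
  | 0 => y
  | k + 1 => mixedRadixRem y k * M k - ⌊mixedRadixRem y k * M k⌋₊

noncomputable def mixedRadixDigit (y : ℝ) (k : ℕ) : ℕ := ⌊mixedRadixRem M y k * M k⌋₊

variable {M}

lemma mixedRadixWeight_zero : mixedRadixWeight M 0 = 1 := by
  simp [mixedRadixWeight]

lemma mixedRadixWeight_succ (k : ℕ) :
    mixedRadixWeight M (k + 1) = mixedRadixWeight M k / M k := by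
  rw [mixedRadixWeight, mixedRadixWeight, Finset.prod_range_succ, mul_inv, div_eq_mul_inv]

lemma mixedRadixWeight_nonneg (k : ℕ) : 0 ≤ mixedRadixWeight M k := by
  unfold mixedRadixWeight; positivity

lemma natCast_mul_mixedRadixWeight_succ {k : ℕ} (hk : M k ≠ 0) :
    M k * mixedRadixWeight M (k + 1) = mixedRadixWeight M k := by
  rw [mixedRadixWeight_succ, mul_div_cancel₀ _ (Nat.cast_ne_zero.2 hk)]

lemma mixedRadixWeight_mul_le {f : ℕ → ℝ} (hM : ∀ k, M k ≠ 0)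
    (hf : ∀ k, f k ≤ M k * f (k + 1)) (k : ℕ) : mixedRadixWeight M k * f 0 ≤ f k := by
  induction k with
  | zero => simp [mixedRadixWeight_zero]
  | succ k ih =>
    have hMk : (0 : ℝ) < M k := Nat.cast_pos.2 (Nat.pos_of_ne_zero (hM k))
    rw [mixedRadixWeight_succ, div_mul_eq_mul_div, div_le_iff₀ hMk, mul_comm (f (k + 1))]
    exact ih.trans (hf k)

lemma tendsto_mixedRadixWeight_zero (hM : ∀ k, 2 ≤ M k) :
    Tendsto (mixedRadixWeight M) atTop (nhds 0) := by
  have hle : ∀ k, mixedRadixWeight M k * (1 / 2 : ℝ) ^ 0 ≤ (1 / 2) ^ k :=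
    mixedRadixWeight_mul_le (fun k => by have := hM k; omega) fun k => by
      have : (2 : ℝ) ≤ M k := by exact_mod_cast hM k
      rw [pow_succ]
      nlinarith [pow_pos (by norm_num : (0 : ℝ) < 1 / 2) k]
  exact squeeze_zero mixedRadixWeight_nonneg
    (fun k => by simpa only [pow_zero, mul_one] using hle k)
    (tendsto_pow_atTop_nhds_zero_of_lt_one (by norm_num) (by norm_num))

lemma mixedRadixPartial_succ (a : ℕ → ℕ) (k : ℕ) :
    mixedRadixPartial M a (k + 1) = mixedRadixPartial M a k + a k * mixedRadixWeight M (k + 1) :=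
  Finset.sum_range_succ _ _

lemma mixedRadixValue_mem_Icc {a : ℕ → ℕ} (ha : a ∈ admissibleDigits M) (k : ℕ) :
    mixedRadixValue M a ∈
      Icc (mixedRadixPartial M a k) (mixedRadixPartial M a k + mixedRadixWeight M k) := by
  have hstep : ∀ k, mixedRadixPartial M a (k + 1) + mixedRadixWeight M (k + 1) ≤
      mixedRadixPartial M a k + mixedRadixWeight M k := fun k => by
    have hak : (a k : ℝ) + 1 ≤ M k := by exact_mod_cast (ha k trivial : a k < M k)
    rw [mixedRadixPartial_succ, ← natCast_mul_mixedRadixWeight_succ (ha k trivial).ne_bot]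
    nlinarith [mixedRadixWeight_nonneg (M := M) (k + 1)]
  refine mem_iInter.1 (Monotone.ciSup_mem_iInter_Icc_of_antitone ?_ (antitone_nat_of_succ_le hstep)
    fun k => le_add_of_nonneg_right (mixedRadixWeight_nonneg k)) k
  refine monotone_nat_of_le_succ fun k => ?_
  rw [mixedRadixPartial_succ]
  exact le_add_of_nonneg_right (mul_nonneg (Nat.cast_nonneg _) (mixedRadixWeight_nonneg _))

lemma abs_mixedRadixValue_sub_le {a b : ℕ → ℕ} (ha : a ∈ admissibleDigits M)
    (hb : b ∈ admissibleDigits M) {k : ℕ} (hab : ∀ j < k, a j = b j) :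
    |mixedRadixValue M a - mixedRadixValue M b| ≤
      (|(a k : ℝ) - b k| + 1) * mixedRadixWeight M (k + 1) := by
  have hpartial : mixedRadixPartial M a k = mixedRadixPartial M b k :=
    Finset.sum_congr rfl fun j hj => by rw [hab j (Finset.mem_range.1 hj)]
  have hdiff : mixedRadixPartial M a (k + 1) - mixedRadixPartial M b (k + 1) =
      ((a k : ℝ) - b k) * mixedRadixWeight M (k + 1) := by
    rw [mixedRadixPartial_succ, mixedRadixPartial_succ, hpartial]; ring
  have hA := mixedRadixValue_mem_Icc ha (k + 1)
  have hB := mixedRadixValue_mem_Icc hb (k + 1)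
  have hw := mixedRadixWeight_nonneg (M := M) (k + 1)
  have hle := mul_le_mul_of_nonneg_right (le_abs_self ((a k : ℝ) - b k)) hw
  have hge := mul_le_mul_of_nonneg_right (neg_abs_le ((a k : ℝ) - b k)) hw
  rw [abs_le]
  constructor <;> linarith [hA.1, hA.2, hB.1, hB.2]

lemma mixedRadixRem_mem_Ico {y : ℝ} (hy : y ∈ Ico 0 1) (k : ℕ) :
    mixedRadixRem M y k ∈ Ico 0 1 := by
  induction k with
  | zero => exact hy
  | succ k ih =>
    have hx : 0 ≤ mixedRadixRem M y k * M k := mul_nonneg ih.1 (Nat.cast_nonneg _)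
    rw [mixedRadixRem]
    exact ⟨sub_nonneg.2 (Nat.floor_le hx),
      by linarith [Nat.lt_floor_add_one (mixedRadixRem M y k * M k)]⟩

lemma mixedRadixDigit_mem_admissibleDigits (hM : ∀ k, M k ≠ 0) {y : ℝ} (hy : y ∈ Ico 0 1) :
    mixedRadixDigit M y ∈ admissibleDigits M := fun k _ => by
  have hrem := mixedRadixRem_mem_Ico (M := M) hy k
  have hMk : (0 : ℝ) < M k := Nat.cast_pos.2 (Nat.pos_of_ne_zero (hM k))
  exact (Nat.floor_lt (mul_nonneg hrem.1 hMk.le)).2 (mul_lt_of_lt_one_left hMk hrem.2)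

lemma mixedRadixPartial_add_rem (hM : ∀ k, M k ≠ 0) (y : ℝ) (k : ℕ) :
    mixedRadixPartial M (mixedRadixDigit M y) k +
      mixedRadixRem M y k * mixedRadixWeight M k = y := by
  induction k with
  | zero => simp [mixedRadixPartial, mixedRadixRem, mixedRadixWeight_zero]
  | succ k ih =>
    rw [← natCast_mul_mixedRadixWeight_succ (hM k)] at ih
    rw [mixedRadixPartial_succ, mixedRadixRem, mixedRadixDigit]
    linear_combination ih

theorem Ico_subset_image_mixedRadixValue (hM : ∀ k, 2 ≤ M k) :
    Ico 0 1 ⊆ mixedRadixValue M '' admissibleDigits M := by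
  have hM0 : ∀ k, M k ≠ 0 := fun k => by have := hM k; omega
  intro y hy
  refine ⟨mixedRadixDigit M y, mixedRadixDigit_mem_admissibleDigits hM0 hy,
    eq_of_forall_dist_le fun ε hε => ?_⟩
  obtain ⟨k, hk⟩ := ((tendsto_order.1 (tendsto_mixedRadixWeight_zero hM)).2 ε hε).exists
  have hyk : y ∈ Icc (mixedRadixPartial M (mixedRadixDigit M y) k)
      (mixedRadixPartial M (mixedRadixDigit M y) k + mixedRadixWeight M k) := by
    have hrem := mixedRadixRem_mem_Ico (M := M) hy k
    have hw := mixedRadixWeight_nonneg (M := M) k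
    have hy := mixedRadixPartial_add_rem hM0 y k
    constructor <;> nlinarith [mul_nonneg hrem.1 hw, mul_le_of_le_one_left hw hrem.2.le]
  calc dist (mixedRadixValue M (mixedRadixDigit M y)) y ≤ mixedRadixWeight M k := by
        simpa using Real.dist_le_of_mem_Icc (mixedRadixValue_mem_Icc
          (mixedRadixDigit_mem_admissibleDigits hM0 hy) k) hyk
    _ ≤ ε := hk.le

end MixedRadix

section CantorSet

variable (q : ℕ → ℕ) (ρ : ℕ → ℝ)

noncomputable def cantorCount (k : ℕ) : ℕ := ⌊q k * ρ k / 2⌋₊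

/-- The level-`k` interval of the Cantor set is `[c k, c k + 2 ρ k / 3]`. Its children are centred
at the `cantorCount q ρ k` largest fractions `m / q k` not exceeding `c k + ρ k / 2`;
the digit `a k` selects one of them. -/
noncomputable def cantorCenter (a : ℕ → ℕ) : ℕ → ℝ
  | 0 => 0
  | k + 1 => (⌊q k * (cantorCenter a k + ρ k / 2)⌋ - a k) / q k

noncomputable def cantorPoint (a : ℕ → ℕ) : ℝ := ⨆ k, cantorCenter q ρ a k

variable {q ρ}

lemma cantorCenter_succ_mem_Icc {a : ℕ → ℕ} {k : ℕ} (hq : 0 < q k)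
    (ha : a k < cantorCount q ρ k) :
    cantorCenter q ρ a (k + 1) ∈
      Icc (cantorCenter q ρ a k) (cantorCenter q ρ a k + ρ k / 2) := by
  have hq' : (0 : ℝ) < q k := Nat.cast_pos.2 hq
  have hak : (a k : ℝ) + 1 ≤ q k * ρ k / 2 := by
    exact_mod_cast (Nat.le_floor_iff' (Nat.succ_ne_zero _)).1 ha
  have h1 := Int.floor_le ((q k : ℝ) * (cantorCenter q ρ a k + ρ k / 2))
  have h2 := Int.sub_one_lt_floor ((q k : ℝ) * (cantorCenter q ρ a k + ρ k / 2))
  have h3 : (0 : ℝ) ≤ a k := Nat.cast_nonneg _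
  rw [cantorCenter, mem_Icc, le_div_iff₀ hq', div_le_iff₀ hq']
  constructor <;> linarith

lemma cantorPoint_mem_Icc (hq : ∀ k, 0 < q k) (hρ : ∀ k, ρ (k + 1) ≤ ρ k / 4)
    {a : ℕ → ℕ} (ha : a ∈ admissibleDigits (cantorCount q ρ)) (k : ℕ) :
    cantorPoint q ρ a ∈ Icc (cantorCenter q ρ a k) (cantorCenter q ρ a k + 2 / 3 * ρ k) := by
  have hsucc k := cantorCenter_succ_mem_Icc (hq k) (ha k trivial)
  refine mem_iInter.1 (Monotone.ciSup_mem_iInter_Icc_of_antitone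
    (g := fun k => cantorCenter q ρ a k + 2 / 3 * ρ k)
    (monotone_nat_of_le_succ fun k => (hsucc k).1) (antitone_nat_of_succ_le fun k => ?_)
    fun k => ?_) k
  · linarith [(hsucc k).2, hρ k]
  · linarith [(hsucc k).1, (hsucc k).2]

lemma nint_mul_cantorPoint_le (hq : ∀ k, 0 < q k) (hρ : ∀ k, ρ (k + 1) ≤ ρ k / 4)
    {a : ℕ → ℕ} (ha : a ∈ admissibleDigits (cantorCount q ρ)) (k : ℕ) :
    nint (q k * cantorPoint q ρ a) ≤ 2 / 3 * q k * ρ (k + 1) := by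
  have hq' : (0 : ℝ) < q k := Nat.cast_pos.2 (hq k)
  have hX := cantorPoint_mem_Icc hq hρ ha (k + 1)
  -- `q k` times the centre of the level-`(k + 1)` interval is an integer
  calc nint (q k * cantorPoint q ρ a)
      ≤ |q k * cantorPoint q ρ a -
          (⌊q k * (cantorCenter q ρ a k + ρ k / 2)⌋ - a k : ℤ)| := nint_le _ _
    _ = q k * |cantorPoint q ρ a - cantorCenter q ρ a (k + 1)| := by
        rw [cantorCenter, ← abs_of_pos hq', ← abs_mul, abs_of_pos hq']
        push_cast
        congr 1
        field_simp
    _ ≤ q k * (2 / 3 * ρ (k + 1)) := by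
        rw [abs_of_nonneg (sub_nonneg.2 hX.1)]
        gcongr
        linarith [hX.2]
    _ = 2 / 3 * q k * ρ (k + 1) := by ring

lemma cantorCenter_eq_of_forall_lt_eq {a b : ℕ → ℕ} {k : ℕ} (hab : ∀ j < k, a j = b j) :
    cantorCenter q ρ a k = cantorCenter q ρ b k := by
  induction k with
  | zero => rfl
  | succ k ih =>
    simp only [cantorCenter, ih fun j hj => hab j (by omega), hab k (by omega)]

lemma one_le_abs_natCast_sub_natCast {m n : ℕ} (h : m ≠ n) : (1 : ℝ) ≤ |(m : ℝ) - n| := by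
  have : (1 : ℤ) ≤ |(m : ℤ) - n| := Int.one_le_abs (sub_ne_zero.2 (by exact_mod_cast h))
  exact_mod_cast this

lemma div_le_abs_cantorPoint_sub (hq : ∀ k, 0 < q k) (hρ : ∀ k, ρ (k + 1) ≤ ρ k / 4)
    (hρq : ∀ k, 4 * q k * ρ (k + 1) ≤ 1) {a b : ℕ → ℕ}
    (ha : a ∈ admissibleDigits (cantorCount q ρ))
    (hb : b ∈ admissibleDigits (cantorCount q ρ)) {k : ℕ} (hab : ∀ j < k, a j = b j)
    (hne : a k ≠ b k) :
    |(a k : ℝ) - b k| / (2 * q k) ≤ |cantorPoint q ρ a - cantorPoint q ρ b| := by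
  have hq' : (0 : ℝ) < q k := Nat.cast_pos.2 (hq k)
  have hcenter : cantorCenter q ρ b (k + 1) - cantorCenter q ρ a (k + 1) = (a k - b k) / q k := by
    simp only [cantorCenter, cantorCenter_eq_of_forall_lt_eq hab]
    ring
  have hA := cantorPoint_mem_Icc hq hρ ha (k + 1)
  have hB := cantorPoint_mem_Icc hq hρ hb (k + 1)
  have hd := one_le_abs_natCast_sub_natCast hne
  have hsmall : 2 / 3 * ρ (k + 1) ≤ |(a k : ℝ) - b k| / (2 * q k) := by
    rw [le_div_iff₀ (by positivity)]
    nlinarith [hρq k]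
  have hgap : |(a k : ℝ) - b k| / q k ≤
      |cantorPoint q ρ a - cantorPoint q ρ b| + 2 / 3 * ρ (k + 1) := by
    rw [← abs_of_pos hq', ← abs_div, ← hcenter, abs_le]
    constructor <;> linarith [hA.1, hA.2, hB.1, hB.2,
      le_abs_self (cantorPoint q ρ a - cantorPoint q ρ b),
      neg_abs_le (cantorPoint q ρ a - cantorPoint q ρ b)]
  have : |(a k : ℝ) - b k| / q k = 2 * (|(a k : ℝ) - b k| / (2 * q k)) := by
    field_simp
  linarith

end CantorSet

/-- `ρ k` is the length scale of the level-`k` intervals and `q k` the denominator of the centres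
of their children: each level-`k` interval contains at least two such centres, and the children
are short compared with the spacing `1 / q k` of the centres. -/
structure IsCantorScale (q : ℕ → ℕ) (ρ : ℕ → ℝ) : Prop where
  four_le_mul : ∀ k, 4 ≤ q k * ρ k
  four_mul_le_one : ∀ k, 4 * q k * ρ (k + 1) ≤ 1

namespace IsCantorScale

variable {q : ℕ → ℕ} {ρ : ℕ → ℝ}

lemma pos (hS : IsCantorScale q ρ) (k : ℕ) : 0 < q k := by
  refine Nat.pos_of_ne_zero fun hq => ?_
  have := hS.four_le_mul k
  simp [hq] at this
  linarith

lemma rho_pos (hS : IsCantorScale q ρ) (k : ℕ) : 0 < ρ k :=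
  pos_of_mul_pos_right (by linarith [hS.four_le_mul k]) (Nat.cast_nonneg (q k))

lemma rho_succ_le (hS : IsCantorScale q ρ) (k : ℕ) : ρ (k + 1) ≤ ρ k / 4 := by
  nlinarith [hS.four_le_mul k, hS.four_mul_le_one k, hS.rho_pos k, hS.rho_pos (k + 1)]

lemma strictMono (hS : IsCantorScale q ρ) : StrictMono q := by
  refine strictMono_nat_of_lt_succ fun k => ?_
  have h : (q k : ℝ) < q (k + 1) := by
    nlinarith [hS.four_le_mul (k + 1), hS.four_mul_le_one k, hS.rho_pos (k + 1)]
  exact_mod_cast h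

lemma two_le_cantorCount (hS : IsCantorScale q ρ) (k : ℕ) : 2 ≤ cantorCount q ρ k :=
  (Nat.le_floor_iff' two_ne_zero).2 (by push_cast; linarith [hS.four_le_mul k])

lemma mul_div_four_le_cantorCount (hS : IsCantorScale q ρ) (k : ℕ) :
    q k * ρ k / 4 ≤ cantorCount q ρ k := by
  have := Nat.sub_one_lt_floor ((q k : ℝ) * ρ k / 2)
  rw [cantorCount]
  linarith [hS.four_le_mul k]

theorem add_one_mul_mixedRadixWeight_succ_le (hS : IsCantorScale q ρ) {r : ℝ} (hr0 : 0 ≤ r)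
    (hr1 : r ≤ 1) (hρ0 : ρ 0 = 1)
    (hgrowth : ∀ k, ρ k ^ r ≤ cantorCount q ρ k * ρ (k + 1) ^ r) {k : ℕ} {d : ℝ} (hd : 1 ≤ d)
    (hdM : d ≤ cantorCount q ρ k) :
    (d + 1) * mixedRadixWeight (cantorCount q ρ) (k + 1) ≤ 16 * (d / (2 * q k)) ^ r := by
  set M := cantorCount q ρ
  have hM : (0 : ℝ) < M k := by exact_mod_cast two_pos.trans_le (hS.two_le_cantorCount k)
  have hq : (0 : ℝ) < q k := Nat.cast_pos.2 (hS.pos k)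
  have hρ := hS.rho_pos k
  have hw0 := mixedRadixWeight_nonneg (M := M) k
  have hw : mixedRadixWeight M k ≤ ρ k ^ r := by
    simpa [hρ0] using mixedRadixWeight_mul_le (M := M)
      (fun k => (two_pos.trans_le (hS.two_le_cantorCount k)).ne') hgrowth k
  have hρM : d * ρ k / M k ≤ 8 * (d / (2 * q k)) := by
    have := hS.mul_div_four_le_cantorCount k
    rw [div_le_iff₀ hM]
    field_simp
    nlinarith
  calc (d + 1) * mixedRadixWeight M (k + 1) = (d + 1) / M k * mixedRadixWeight M k := by
        rw [mixedRadixWeight_succ]; ring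
    _ ≤ 2 * (d / M k) * mixedRadixWeight M k := by
        rw [← mul_div_assoc]
        gcongr
        linarith
    _ ≤ 2 * ((d / M k) ^ r * ρ k ^ r) := by
        rw [mul_assoc]
        gcongr
        exact Real.self_le_rpow_of_le_one (by positivity) ((div_le_one hM).2 hdM) hr1
    _ = 2 * (d * ρ k / M k) ^ r := by
        rw [← Real.mul_rpow (by positivity) hρ.le, div_mul_eq_mul_div]
    _ ≤ 2 * (8 * (d / (2 * q k))) ^ r := by gcongr
    _ = 2 * 8 ^ r * (d / (2 * q k)) ^ r := by
        rw [Real.mul_rpow (by norm_num) (by positivity)]; ring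
    _ ≤ 16 * (d / (2 * q k)) ^ r := by
        have : (8 : ℝ) ^ r ≤ 8 := Real.rpow_le_self_of_one_le (by norm_num) hr1
        gcongr
        linarith

theorem abs_mixedRadixValue_sub_le_rpow (hS : IsCantorScale q ρ) {r : ℝ} (hr0 : 0 ≤ r)
    (hr1 : r ≤ 1) (hρ0 : ρ 0 = 1)
    (hgrowth : ∀ k, ρ k ^ r ≤ cantorCount q ρ k * ρ (k + 1) ^ r)
    {a b : ℕ → ℕ} (ha : a ∈ admissibleDigits (cantorCount q ρ))
    (hb : b ∈ admissibleDigits (cantorCount q ρ)) :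
    |mixedRadixValue (cantorCount q ρ) a - mixedRadixValue (cantorCount q ρ) b| ≤
      16 * |cantorPoint q ρ a - cantorPoint q ρ b| ^ r := by
  rcases eq_or_ne a b with rfl | hab
  · simp only [sub_self, abs_zero]; positivity
  set k := PiNat.firstDiff a b
  have hpre : ∀ j < k, a j = b j := fun j hj => PiNat.apply_eq_of_lt_firstDiff hj
  have hne := PiNat.apply_firstDiff_ne hab
  have hdM : |(a k : ℝ) - b k| ≤ cantorCount q ρ k := by
    have hak : (a k : ℝ) < cantorCount q ρ k := by exact_mod_cast ha k trivial
    have hbk : (b k : ℝ) < cantorCount q ρ k := by exact_mod_cast hb k trivial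
    rw [abs_sub_le_iff]
    constructor <;> linarith [(Nat.cast_nonneg (a k) : (0 : ℝ) ≤ _),
      (Nat.cast_nonneg (b k) : (0 : ℝ) ≤ _)]
  calc _ ≤ (|(a k : ℝ) - b k| + 1) * mixedRadixWeight (cantorCount q ρ) (k + 1) :=
        _root_.abs_mixedRadixValue_sub_le ha hb hpre
    _ ≤ 16 * (|(a k : ℝ) - b k| / (2 * q k)) ^ r := hS.add_one_mul_mixedRadixWeight_succ_le hr0
        hr1 hρ0 hgrowth (one_le_abs_natCast_sub_natCast hne) hdM
    _ ≤ 16 * |cantorPoint q ρ a - cantorPoint q ρ b| ^ r := by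
        gcongr
        exact div_le_abs_cantorPoint_sub hS.pos hS.rho_succ_le hS.four_mul_le_one ha hb hpre hne

theorem le_dimH_image_cantorPoint (hS : IsCantorScale q ρ) {r : ℝ≥0} (hr0 : 0 < r)
    (hr1 : r ≤ 1) (hρ0 : ρ 0 = 1)
    (hgrowth : ∀ k, ρ k ^ (r : ℝ) ≤ cantorCount q ρ k * ρ (k + 1) ^ (r : ℝ)) :
    (r : ℝ≥0∞) ≤ dimH (cantorPoint q ρ '' admissibleDigits (cantorCount q ρ)) := by
  set M := cantorCount q ρ
  have hholder : ∀ a ∈ admissibleDigits M, ∀ b ∈ admissibleDigits M,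
      edist (mixedRadixValue M a) (mixedRadixValue M b) ≤
        (16 : ℝ≥0) * edist (cantorPoint q ρ a) (cantorPoint q ρ b) ^ (r : ℝ) := by
    intro a ha b hb
    rw [edist_dist, edist_dist, Real.dist_eq, Real.dist_eq,
      ENNReal.ofReal_rpow_of_nonneg (abs_nonneg _) r.coe_nonneg, ← ENNReal.ofReal_coe_nnreal,
      ← ENNReal.ofReal_mul (by positivity)]
    exact ENNReal.ofReal_le_ofReal
      (hS.abs_mixedRadixValue_sub_le_rpow r.coe_nonneg hr1 hρ0 hgrowth ha hb)
  have hone : 1 ≤ dimH (mixedRadixValue M '' admissibleDigits M) :=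
    calc (1 : ℝ≥0∞) = dimH (Ico (0 : ℝ) 1) := by
          rw [Real.dimH_of_nonempty_interior (by simp)]; simp
      _ ≤ _ := dimH_mono (Ico_subset_image_mixedRadixValue hS.two_le_cantorCount)
  have := hone.trans (dimH_image_le_of_edist_le hr0 hholder)
  rwa [ENNReal.le_div_iff_mul_le (Or.inl (by exact_mod_cast hr0.ne')) (Or.inl ENNReal.coe_ne_top),
    one_mul] at this

end IsCantorScale

lemma nonneg_of_tendsto_neg_log_div_log {ψ : ℕ → ℝ} (hψ : ∀ q, ψ q ∈ Icc 0 1) {L : ℝ}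
    (hL : Tendsto (fun q : ℕ => -Real.log (ψ q) / Real.log q) atTop (nhds L)) : 0 ≤ L :=
  ge_of_tendsto' hL fun q =>
    div_nonneg (neg_nonneg.2 (Real.log_nonpos (hψ q).1 (hψ q).2)) (Real.log_natCast_nonneg q)

lemma eventually_rpow_neg_le {ψ : ℕ → ℝ} {L τ : ℝ}
    (hL : Tendsto (fun q : ℕ => -Real.log (ψ q) / Real.log q) atTop (nhds L)) (hτ : L < τ) :
    ∀ᶠ q : ℕ in atTop, 0 < ψ q → (q : ℝ) ^ (-τ) ≤ ψ q := by
  filter_upwards [hL.eventually (gt_mem_nhds hτ), eventually_ge_atTop 2] with q hlt hq hψ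
  have hq1 : (1 : ℝ) < q := by exact_mod_cast hq
  have hlog : 0 < Real.log q := Real.log_pos hq1
  rw [← Real.log_le_log_iff (Real.rpow_pos_of_pos (by positivity) _) hψ,
    Real.log_rpow (by positivity)]
  rw [div_lt_iff₀ hlog] at hlt
  linarith

lemma exists_good_denominator {Q : Set ℕ} (hQ : Q.Infinite) {ψ : ℕ → ℝ} {τ r : ℝ}
    (hr0 : 0 ≤ r) (hr1 : r ≤ 1) (hτr : (τ + 1) * r < 1)
    (hlow : ∀ᶠ q : ℕ in atTop, q ∈ Q → (q : ℝ) ^ (-τ) ≤ ψ q) {ρ : ℝ} (hρ : 0 < ρ) :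
    ∃ q : ℕ, (q ∈ Q ∧ 4 ≤ q * ρ ∧ ρ ^ r ≤ ⌊q * ρ / 2⌋₊ * (ψ q / (2 * q)) ^ r) ∧
      0 < ψ q / (2 * q) := by
  set η := 1 - (τ + 1) * r
  have hη : 0 < η := sub_pos.2 hτr
  have htend : Tendsto (fun q : ℕ => (q : ℝ) ^ η) atTop atTop :=
    (tendsto_rpow_atTop hη).comp tendsto_natCast_atTop_atTop
  obtain ⟨N, hN⟩ := eventually_atTop.1 (hlow.and
    ((tendsto_natCast_atTop_atTop.eventually_ge_atTop (4 / ρ)).and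
      (htend.eventually_ge_atTop (8 * ρ ^ r / ρ))))
  obtain ⟨q, hqQ, hqN⟩ := hQ.exists_gt N
  obtain ⟨hψq, hq4, hqη⟩ := hN q hqN.le
  have hq : (0 : ℝ) < q := (by positivity : (0 : ℝ) < 4 / ρ).trans_le hq4
  have hψ : (q : ℝ) ^ (-τ) ≤ ψ q := hψq hqQ
  have hψpos : 0 < ψ q := (Real.rpow_pos_of_pos hq _).trans_le hψ
  have hqρ : 4 ≤ q * ρ := by rwa [div_le_iff₀ hρ] at hq4
  have hfloor : q * ρ / 4 ≤ ⌊q * ρ / 2⌋₊ := by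
    linarith [Nat.sub_one_lt_floor ((q : ℝ) * ρ / 2)]
  have hψr : (q : ℝ) ^ (-(τ + 1) * r) / 2 ≤ (ψ q / (2 * q)) ^ r := by
    have hbase : (q : ℝ) ^ (-(τ + 1)) / 2 ≤ ψ q / (2 * q) := by
      rw [show -(τ + 1) = -τ - 1 by ring, Real.rpow_sub_one hq.ne', div_div, mul_comm]
      gcongr
    calc (q : ℝ) ^ (-(τ + 1) * r) / 2 ≤ (q : ℝ) ^ (-(τ + 1) * r) / 2 ^ r := by
          gcongr
          exact Real.rpow_le_self_of_one_le one_le_two hr1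
      _ = ((q : ℝ) ^ (-(τ + 1)) / 2) ^ r := by
          rw [Real.div_rpow (by positivity) zero_le_two, Real.rpow_mul hq.le]
      _ ≤ (ψ q / (2 * q)) ^ r := by gcongr
  refine ⟨q, ⟨hqQ, hqρ, ?_⟩, by positivity⟩
  calc ρ ^ r = ρ / 8 * (8 * ρ ^ r / ρ) := by field_simp
    _ ≤ ρ / 8 * (q : ℝ) ^ η := by gcongr
    _ = q * ρ / 4 * ((q : ℝ) ^ (-(τ + 1) * r) / 2) := by
        rw [show η = 1 + -(τ + 1) * r by ring, Real.rpow_add hq, Real.rpow_one]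
        ring
    _ ≤ ⌊q * ρ / 2⌋₊ * (ψ q / (2 * q)) ^ r := by
        gcongr

lemma exists_isCantorScale {ψ : ℕ → ℝ} (hψ : ∀ q, ψ q ∈ Ico (0 : ℝ) (1 / 2)) {L : ℝ}
    (hL : Tendsto (fun q : ℕ => -Real.log (ψ q) / Real.log q) atTop (nhds L)) {Q : Set ℕ}
    (hQ : Q.Infinite) (hQψ : ∀ q ∈ Q, 0 < ψ q) {r : ℝ} (hr0 : 0 ≤ r) (hr1 : r ≤ 1)
    (hrL : (L + 1) * r < 1) :
    ∃ (q : ℕ → ℕ) (ρ : ℕ → ℝ), IsCantorScale q ρ ∧ ρ 0 = 1 ∧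
      (∀ k, ρ k ^ r ≤ cantorCount q ρ k * ρ (k + 1) ^ r) ∧
      (∀ k, q k ∈ Q) ∧ ∀ k, ρ (k + 1) = ψ (q k) / (2 * q k) := by
  obtain ⟨τ, hLτ, hτr⟩ : ∃ τ > L, (τ + 1) * r < 1 :=
    ((((continuous_add_const 1).mul continuous_const).tendsto L).eventually
      (gt_mem_nhds hrL)).exists_gt
  have hlow : ∀ᶠ q : ℕ in atTop, q ∈ Q → (q : ℝ) ^ (-τ) ≤ ψ q :=
    (eventually_rpow_neg_le hL hLτ).mono fun q h hq => h (hQψ q hq)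
  obtain ⟨q, ρ, hρ0, hstep⟩ := exists_seq_of_forall_exists
    (fun ρ hρ => exists_good_denominator hQ hr0 hr1 hτr hlow hρ) one_pos
  refine ⟨q, ρ, ⟨fun k => (hstep k).1.2.1, fun k => ?_⟩, hρ0,
    fun k => (hstep k).2 ▸ (hstep k).1.2.2, fun k => (hstep k).1.1, fun k => (hstep k).2⟩
  rw [(hstep k).2]
  rcases eq_or_ne (q k : ℝ) 0 with hq | hq
  · simp [hq]
  · rw [show 4 * (q k : ℝ) * (ψ (q k) / (2 * q k)) = 2 * ψ (q k) by field_simp; ring]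
    linarith [(hψ (q k)).2]

lemma cantorPoint_mem_fiber {ψ : ℕ → ℝ} {x₁ : ℝ} (hx₁ : ![x₁] ∈ ExactSet 1 ψ) {q : ℕ → ℕ}
    {ρ : ℕ → ℝ} (hS : IsCantorScale q ρ) (hρ0 : ρ 0 = 1) (hq : ∀ k, nint (q k * x₁) < ψ (q k))
    (hρ : ∀ k, ρ (k + 1) = ψ (q k) / (2 * q k)) {a : ℕ → ℕ}
    (ha : a ∈ admissibleDigits (cantorCount q ρ)) :
    cantorPoint q ρ a ∈ {x₂ : ℝ | x₂ ∈ Icc (0 : ℝ) 1 ∧ ![x₁, x₂] ∈ ExactSet 2 ψ} := by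
  have hX : cantorPoint q ρ a ∈ Icc (0 : ℝ) 1 := by
    have h := cantorPoint_mem_Icc hS.pos hS.rho_succ_le ha 0
    simp only [cantorCenter, hρ0] at h
    exact ⟨h.1, by linarith [h.2]⟩
  refine ⟨hX, cons_mem_exactSet_two hx₁ hX (infinite_of_injective_forall_mem
    hS.strictMono.injective fun k => ⟨hq k, ?_⟩)⟩
  have hq0 : (0 : ℝ) < q k := Nat.cast_pos.2 (hS.pos k)
  calc nint (q k * cantorPoint q ρ a) ≤ 2 / 3 * q k * ρ (k + 1) :=
        nint_mul_cantorPoint_le hS.pos hS.rho_succ_le ha k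
    _ = ψ (q k) / 3 := by rw [hρ k]; field_simp
    _ < ψ (q k) := by linarith [(nint_nonneg _).trans_lt (hq k)]

theorem fiber_dimH_ge_general (ψ : ℕ → ℝ) (hψ : ∀ q, ψ q ∈ Set.Ico (0 : ℝ) (1 / 2))
    (L : ℝ)
    (hL : Tendsto (fun q : ℕ => -Real.log (ψ q) / Real.log q) atTop (nhds L))
    (x₁ : ℝ) (hx₁ : ![x₁] ∈ ExactSet 1 ψ) :
    ENNReal.ofReal (1 / (L + 1)) ≤
      dimH {x₂ : ℝ | x₂ ∈ Set.Icc (0 : ℝ) 1 ∧ ![x₁, x₂] ∈ ExactSet 2 ψ} := by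
  have hL0 : 0 ≤ L := nonneg_of_tendsto_neg_log_div_log
    (fun q => ⟨(hψ q).1, by linarith [(hψ q).2]⟩) hL
  refine ENNReal.le_of_forall_pos_nnreal_lt fun r hr0 hr => ?_
  rw [ENNReal.lt_ofReal_iff_toReal_lt ENNReal.coe_ne_top, ENNReal.coe_toReal,
    lt_div_iff₀ (by linarith)] at hr
  have hr1 : r ≤ 1 := by exact_mod_cast (by nlinarith : (r : ℝ) ≤ 1)
  set Q := {q : ℕ | nint (q * x₁) < ψ q}
  have hQ : Q.Infinite := hx₁.1.2.mono fun q hq => by exact hq 0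
  obtain ⟨q, ρ, hS, hρ0, hgrowth, hqQ, hρ⟩ := exists_isCantorScale hψ hL hQ
    (fun q hq => (nint_nonneg _).trans_lt hq) r.coe_nonneg hr1 (by linarith)
  refine (hS.le_dimH_image_cantorPoint hr0 hr1 hρ0 hgrowth).trans (dimH_mono ?_)
  rintro _ ⟨a, ha, rfl⟩
  exact cantorPoint_mem_fiber hx₁ hS hρ0 hqQ hρ ha

theorem fiber_dimH_ge (ψ : ℕ → ℝ) (hψ : ∀ q, ψ q ∈ Set.Ico (0 : ℝ) (1 / 2))
    (hmono : ∀ p q : ℕ, p ≤ q → (q : ℝ) * ψ q ≤ (p : ℝ) * ψ p)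
    (hzero : Tendsto (fun q : ℕ => (q : ℝ) * ψ q) atTop (nhds 0))
    (L : ℝ)
    (hL : Tendsto (fun q : ℕ => -Real.log (ψ q) / Real.log q) atTop (nhds L))
    (x₁ : ℝ) (hx₁ : ![x₁] ∈ ExactSet 1 ψ) :
    ENNReal.ofReal (1 / (L + 1)) ≤
      dimH {x₂ : ℝ | x₂ ∈ Set.Icc (0 : ℝ) 1 ∧ ![x₁, x₂] ∈ ExactSet 2 ψ} :=
  fiber_dimH_ge_general ψ hψ L hL x₁ hx₁
end

section
/- Let ψ: ℕ → [0,1/2) be a function with ψ(q) > 0 for all q, and assume the limit λ := lim_{q→∞} (−log ψ(q))/(log q) exists as a finite real number (necessarily λ ≥ 0). Let Q ⊆ ℕ be an infinite set, let ε ∈ (0,1), and set s := (1−ε)/(λ+1). Then the series ∑_{q ∈ Q} (ψ(q)/q)^s · φ(q) diverges to +∞, where φ denotes Euler's totient function. -/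
open Set Filter MeasureTheory

section AuxTotient
open Filter Finset

lemma my_totient_lb_aux (K : ℕ) (hK : 2 ≤ K) (n : ℕ) (hn : 1 ≤ n) :
    (n : ℝ) * (2 : ℝ)⁻¹ ^ K * (1 - (K:ℝ)⁻¹) ^ n.primeFactors.card ≤ n.totient := by
  have hKR : (2:ℝ) ≤ K := by exact_mod_cast hK
  have hb : (0:ℝ) < 1 - (K:ℝ)⁻¹ := by
    have h1 : (K:ℝ)⁻¹ ≤ 2⁻¹ := by
      apply inv_anti₀ <;> linarith
    linarith
  have hcast : (n.totient : ℝ) = n * ∏ p ∈ n.primeFactors, (1 - (p:ℝ)⁻¹) := by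
    have h := congrArg (Rat.cast : ℚ → ℝ) (Nat.totient_eq_mul_prod_factors n)
    push_cast at h
    exact h
  rw [hcast]
  set P := n.primeFactors with hP
  have hsplit : ∏ p ∈ P, (1 - (p:ℝ)⁻¹)
      = (∏ p ∈ P.filter (· ≤ K), (1 - (p:ℝ)⁻¹)) * ∏ p ∈ P.filter (¬ · ≤ K), (1 - (p:ℝ)⁻¹) :=
    (Finset.prod_filter_mul_prod_filter_not P _ _).symm
  have hsmall : (2:ℝ)⁻¹ ^ K ≤ ∏ p ∈ P.filter (· ≤ K), (1 - (p:ℝ)⁻¹) := by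
    calc (2:ℝ)⁻¹ ^ K ≤ (2:ℝ)⁻¹ ^ (P.filter (· ≤ K)).card := by
          apply pow_le_pow_of_le_one (by norm_num) (by norm_num)
          calc (P.filter (· ≤ K)).card ≤ (Finset.Ioc 1 K).card := by
                apply Finset.card_le_card
                intro p hp
                simp only [Finset.mem_filter] at hp
                have hpp : p.Prime := Nat.prime_of_mem_primeFactors hp.1
                exact Finset.mem_Ioc.mpr ⟨hpp.one_lt, hp.2⟩
            _ ≤ K := by simp [Nat.card_Ioc]
      _ = ∏ p ∈ P.filter (· ≤ K), (2:ℝ)⁻¹ := by rw [Finset.prod_const]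
      _ ≤ _ := by
          apply Finset.prod_le_prod (fun p _ => by norm_num)
          intro p hp
          simp only [Finset.mem_filter] at hp
          have hpp : p.Prime := Nat.prime_of_mem_primeFactors hp.1
          have : (p:ℝ)⁻¹ ≤ 2⁻¹ := by
            apply inv_anti₀ (by norm_num)
            exact_mod_cast hpp.two_le
          linarith
  have hbig : (1 - (K:ℝ)⁻¹) ^ P.card ≤ ∏ p ∈ P.filter (¬ · ≤ K), (1 - (p:ℝ)⁻¹) := by
    calc (1 - (K:ℝ)⁻¹) ^ P.card ≤ (1 - (K:ℝ)⁻¹) ^ (P.filter (¬ · ≤ K)).card := by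
          apply pow_le_pow_of_le_one hb.le (sub_le_self _ (by positivity))
          exact Finset.card_le_card (Finset.filter_subset _ _)
      _ = ∏ p ∈ P.filter (¬ · ≤ K), (1 - (K:ℝ)⁻¹) := by rw [Finset.prod_const]
      _ ≤ _ := by
          apply Finset.prod_le_prod (fun p _ => hb.le)
          intro p hp
          simp only [Finset.mem_filter] at hp
          have hpK : (K:ℝ) ≤ p := by exact_mod_cast (le_of_not_ge hp.2)
          have : (p:ℝ)⁻¹ ≤ (K:ℝ)⁻¹ := by
            apply inv_anti₀ (by linarith) hpK
          linarith
  have hnn : (0:ℝ) ≤ (n:ℝ) := Nat.cast_nonneg n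
  rw [hsplit]
  calc (n:ℝ) * (2:ℝ)⁻¹ ^ K * (1 - (K:ℝ)⁻¹) ^ P.card
      ≤ (n:ℝ) * ((∏ p ∈ P.filter (· ≤ K), (1 - (p:ℝ)⁻¹)) * ∏ p ∈ P.filter (¬ · ≤ K), (1 - (p:ℝ)⁻¹)) := by
        rw [mul_assoc]
        apply mul_le_mul_of_nonneg_left _ hnn
        apply mul_le_mul hsmall hbig (by positivity) (le_trans (by positivity) hsmall)
    _ = _ := by ring

lemma my_card_primeFactors_le (n : ℕ) (hn : 1 ≤ n) :
    (n.primeFactors.card : ℝ) * Real.log 2 ≤ Real.log n := by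
  have h2 : 2 ^ n.primeFactors.card ≤ n := by
    calc 2 ^ n.primeFactors.card = ∏ _p ∈ n.primeFactors, 2 := by rw [Finset.prod_const]
      _ ≤ ∏ p ∈ n.primeFactors, p :=
          Finset.prod_le_prod' (fun p hp => (Nat.prime_of_mem_primeFactors hp).two_le)
      _ ≤ n := Nat.le_of_dvd hn (Nat.prod_primeFactors_dvd n)
  have h2R : ((2:ℝ)) ^ n.primeFactors.card ≤ (n:ℝ) := by exact_mod_cast h2
  calc (n.primeFactors.card : ℝ) * Real.log 2 = Real.log ((2:ℝ) ^ n.primeFactors.card) := by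
        rw [Real.log_pow]
    _ ≤ Real.log n := Real.log_le_log (by positivity) h2R

lemma my_totient_eventually (δ : ℝ) (hδ : 0 < δ) :
    ∀ᶠ n : ℕ in atTop, (n:ℝ) ^ (1 - δ) ≤ n.totient := by
  set K : ℕ := max 2 ⌈6/δ⌉₊ with hKdef
  have hK2 : 2 ≤ K := le_max_left _ _
  have hKR : (2:ℝ) ≤ K := by exact_mod_cast hK2
  have hKpos : (0:ℝ) < K := by linarith
  have hKinv : (K:ℝ)⁻¹ ≤ 2⁻¹ := by apply inv_anti₀ <;> linarith
  have hb : (0:ℝ) < 1 - (K:ℝ)⁻¹ := by linarith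
  have hb1 : 1 - (K:ℝ)⁻¹ ≤ 1 := sub_le_self _ (by positivity)
  set β : ℝ := -(Real.log (1 - (K:ℝ)⁻¹)) / Real.log 2 with hβdef
  have hlog2 : (2:ℝ)/3 ≤ Real.log 2 := by
    have := Real.log_two_gt_d9; linarith
  have hlog2pos : (0:ℝ) < Real.log 2 := by linarith
  have hβ0 : 0 ≤ β := by
    apply div_nonneg _ hlog2pos.le
    have : Real.log (1 - (K:ℝ)⁻¹) ≤ 0 := Real.log_nonpos hb.le hb1
    linarith
  -- β ≤ δ/2
  have hexp : Real.exp (-(2/K)) ≤ 1 - (K:ℝ)⁻¹ := by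
    have h1 : 1 + 2/(K:ℝ) ≤ Real.exp (2/K) := by
      have := Real.add_one_le_exp (2/(K:ℝ)); linarith
    rw [Real.exp_neg]
    have hpos1 : (0:ℝ) < 1 + 2/K := by positivity
    have key : 1 ≤ (1 - (K:ℝ)⁻¹) * (1 + 2/K) := by
      have h4 : (K:ℝ)⁻¹ * (K:ℝ) = 1 := inv_mul_cancel₀ (ne_of_gt hKpos)
      have h5 : 2/(K:ℝ) = 2 * (K:ℝ)⁻¹ := by rw [div_eq_mul_inv]
      rw [h5]
      nlinarith [mul_nonneg (inv_pos.mpr hKpos).le (sub_nonneg.mpr hKinv),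
        inv_pos.mpr hKpos]
    calc (Real.exp (2/K))⁻¹ ≤ (1 + 2/(K:ℝ))⁻¹ := inv_anti₀ hpos1 h1
      _ ≤ 1 - (K:ℝ)⁻¹ := by
          rw [inv_le_iff_one_le_mul₀ hpos1]
          linarith [key]
  have hlogb : -(Real.log (1 - (K:ℝ)⁻¹)) ≤ 2/K := by
    have := Real.log_le_log (Real.exp_pos _) hexp
    rw [Real.log_exp] at this
    linarith
  have hβle : β ≤ δ/2 := by
    have h6 : (6:ℝ)/δ ≤ K := by
      calc (6:ℝ)/δ ≤ (⌈6/δ⌉₊ : ℝ) := Nat.le_ceil _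
        _ ≤ K := by exact_mod_cast le_max_right 2 ⌈6/δ⌉₊
    have h7 : β ≤ 3/K := by
      rw [hβdef]
      have ha : -(Real.log (1 - (K:ℝ)⁻¹)) / Real.log 2 ≤ (2/K) / (2/3) := by
        apply div_le_div₀ (by positivity) hlogb (by norm_num) hlog2
      calc -(Real.log (1 - (K:ℝ)⁻¹)) / Real.log 2 ≤ (2/K) / (2/3) := ha
        _ = 3/K := by ring
    have h8 : (3:ℝ)/K ≤ δ/2 := by
      have h6' : (6:ℝ) ≤ K * δ := by
        have := mul_le_mul_of_nonneg_right h6 hδ.le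
        rwa [div_mul_cancel₀ _ (ne_of_gt hδ)] at this
      rw [div_le_div_iff₀ hKpos (by norm_num)]
      linarith
    linarith
  -- eventual bound
  have hev : ∀ᶠ n : ℕ in atTop, ((2:ℝ))^K ≤ (n:ℝ)^(δ/2) := by
    have ht : Tendsto (fun n : ℕ => (n:ℝ)^(δ/2)) atTop atTop :=
      (tendsto_rpow_atTop (by linarith)).comp tendsto_natCast_atTop_atTop
    exact ht.eventually_ge_atTop _
  filter_upwards [hev, eventually_ge_atTop 1] with n hn2 hn1
  have hnpos : (0:ℝ) < n := by exact_mod_cast hn1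
  have hn1R : (1:ℝ) ≤ n := by exact_mod_cast hn1
  -- (1-K⁻¹)^card ≥ n^(-β)
  have hcard : ((n.primeFactors.card : ℝ)) ≤ Real.log n / Real.log 2 := by
    rw [le_div_iff₀ hlog2pos]
    exact my_card_primeFactors_le n hn1
  have hstep1 : (n:ℝ)^(-β) ≤ (1 - (K:ℝ)⁻¹) ^ n.primeFactors.card := by
    have e1 : (1 - (K:ℝ)⁻¹) ^ (Real.log n / Real.log 2) = (n:ℝ)^(-β) := by
      rw [Real.rpow_def_of_pos hb, Real.rpow_def_of_pos hnpos]
      congr 1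
      rw [hβdef]
      field_simp
    rw [← e1, ← Real.rpow_natCast (1 - (K:ℝ)⁻¹) n.primeFactors.card]
    exact Real.rpow_le_rpow_of_exponent_ge hb hb1 hcard
  have haux := my_totient_lb_aux K hK2 n hn1
  -- combine
  have hmain : (n:ℝ)^(1-δ) ≤ (n:ℝ) * (2:ℝ)⁻¹ ^ K * (n:ℝ)^(-β) := by
    have ea : (n:ℝ) * (n:ℝ)^(-β) = (n:ℝ)^(1-β) := by
      rw [show (1:ℝ)-β = 1 + -β by ring, Real.rpow_add hnpos, Real.rpow_one]
    have eb : (n:ℝ)^(1-δ) * (n:ℝ)^(δ-β) = (n:ℝ)^(1-β) := by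
      rw [← Real.rpow_add hnpos]; ring_nf
    have e2 : (n:ℝ) * (2:ℝ)⁻¹ ^ K * (n:ℝ)^(-β)
        = (n:ℝ)^(1-δ) * ((n:ℝ)^(δ-β) * (2:ℝ)⁻¹^K) := by
      calc (n:ℝ) * (2:ℝ)⁻¹ ^ K * (n:ℝ)^(-β) = ((n:ℝ) * (n:ℝ)^(-β)) * (2:ℝ)⁻¹^K := by ring
        _ = (n:ℝ)^(1-β) * (2:ℝ)⁻¹^K := by rw [ea]
        _ = ((n:ℝ)^(1-δ) * (n:ℝ)^(δ-β)) * (2:ℝ)⁻¹^K := by rw [eb]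
        _ = _ := by ring
    rw [e2]
    have h10 : (1:ℝ) ≤ (n:ℝ)^(δ-β) * (2:ℝ)⁻¹^K := by
      have h11 : (n:ℝ)^(δ/2) ≤ (n:ℝ)^(δ-β) :=
        Real.rpow_le_rpow_of_exponent_le hn1R (by linarith)
      have h12 : ((2:ℝ))^K ≤ (n:ℝ)^(δ-β) := le_trans hn2 h11
      have h13 : (0:ℝ) < (2:ℝ)^K := by positivity
      rw [inv_pow, ← div_eq_mul_inv, le_div_iff₀ h13, one_mul]
      linarith
    nth_rewrite 1 [← mul_one ((n:ℝ)^(1-δ))]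
    apply mul_le_mul_of_nonneg_left h10 (by positivity)
  calc (n:ℝ)^(1-δ) ≤ (n:ℝ) * (2:ℝ)⁻¹ ^ K * (n:ℝ)^(-β) := hmain
    _ ≤ (n:ℝ) * (2:ℝ)⁻¹ ^ K * (1 - (K:ℝ)⁻¹) ^ n.primeFactors.card := by
        apply mul_le_mul_of_nonneg_left hstep1 (by positivity)
    _ ≤ n.totient := haux

end AuxTotient

theorem series_diverges (ψ : ℕ → ℝ) (hψ : ∀ q, ψ q ∈ Set.Ico (0 : ℝ) (1 / 2))
    (hpos : ∀ q, 0 < ψ q) (L : ℝ) (hL0 : 0 ≤ L)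
    (hL : Tendsto (fun q : ℕ => -Real.log (ψ q) / Real.log q) atTop (nhds L))
    (Q : Set ℕ) (hQ : Q.Infinite) (ε : ℝ) (hε : ε ∈ Set.Ioo (0 : ℝ) 1) :
    ∑' q : Q, ENNReal.ofReal ((ψ q / (q : ℝ)) ^ ((1 - ε) / (L + 1)) * (q : ℕ).totient) = ⊤ := by
  obtain ⟨hε0, hε1⟩ := hε
  have hL1 : (0:ℝ) < L + 1 := by linarith
  set s : ℝ := (1 - ε) / (L + 1) with hs
  have hs0 : 0 < s := div_pos (by linarith) hL1
  have hsL : s * (L + 1) = 1 - ε := div_mul_cancel₀ _ (ne_of_gt hL1)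
  set η : ℝ := ε / (2 * s) with hη
  have hη0 : 0 < η := by positivity
  have hsη : s * η = ε / 2 := by rw [hη]; field_simp
  have hev1 : ∀ᶠ q : ℕ in atTop, -Real.log (ψ q) / Real.log q < L + η :=
    hL.eventually_lt_const (by linarith)
  have hev2 := my_totient_eventually (ε/4) (by linarith)
  have hkey : ∀ᶠ q : ℕ in atTop, 1 ≤ (ψ q / q) ^ s * (q.totient : ℝ) := by
    filter_upwards [hev1, hev2, eventually_ge_atTop 2] with q h1 h2 hq2
    have hq2R : (2:ℝ) ≤ q := by exact_mod_cast hq2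
    have hqpos : (0:ℝ) < q := by linarith
    have hq1R : (1:ℝ) ≤ q := by linarith
    have hlogq : 0 < Real.log q := Real.log_pos (by linarith)
    have h1' : -Real.log (ψ q) < (L + η) * Real.log q := by
      rw [div_lt_iff₀ hlogq] at h1; linarith
    have hψq := hpos q
    have hψlb : (q:ℝ) ^ (-(L+η)) ≤ ψ q := by
      rw [Real.rpow_def_of_pos hqpos]
      calc Real.exp (Real.log q * -(L+η)) ≤ Real.exp (Real.log (ψ q)) := by
            apply Real.exp_le_exp.mpr; nlinarith
        _ = ψ q := Real.exp_log hψq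
    have hdiv : (q:ℝ) ^ (-(L+η+1)) ≤ ψ q / q := by
      have e1 : (q:ℝ) ^ (-(L+η+1)) = (q:ℝ) ^ (-(L+η)) / q := by
        rw [show -(L+η+1) = -(L+η) - 1 by ring, Real.rpow_sub hqpos, Real.rpow_one]
      rw [e1]
      gcongr
    have h4 : (q:ℝ) ^ (-(1-ε/2)) ≤ (ψ q / q) ^ s := by
      have hexp : (-(L+η+1)) * s = -(1-ε/2) := by linear_combination (-1:ℝ)*hsL - hsη
      calc (q:ℝ) ^ (-(1-ε/2)) = ((q:ℝ) ^ (-(L+η+1))) ^ s := by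
            rw [← Real.rpow_mul hqpos.le, hexp]
        _ ≤ (ψ q / q) ^ s :=
            Real.rpow_le_rpow (Real.rpow_nonneg hqpos.le _) hdiv hs0.le
    calc (1:ℝ) ≤ (q:ℝ) ^ (ε/4) := Real.one_le_rpow hq1R (by linarith)
      _ = (q:ℝ) ^ (-(1-ε/2)) * (q:ℝ) ^ (1-ε/4) := by
          rw [← Real.rpow_add hqpos]; ring_nf
      _ ≤ (ψ q / q) ^ s * (q.totient : ℝ) := by
          apply mul_le_mul h4 h2 (Real.rpow_nonneg hqpos.le _)
          exact le_trans (Real.rpow_nonneg hqpos.le _) h4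
  obtain ⟨N, hN⟩ := eventually_atTop.mp hkey
  set S : Set ℕ := Q ∩ Set.Ici N with hS
  have hSinf : S.Infinite := by
    have he : Q \ Set.Iio N = S := by
      ext x; simp [hS, Set.mem_diff, not_lt, and_comm]
    rw [← he]; exact hQ.diff (Set.finite_Iio N)
  haveI := hSinf.to_subtype
  refine top_unique ?_
  calc (⊤:ENNReal) = ∑' _x : S, (1:ENNReal) :=
        (ENNReal.tsum_const_eq_top_of_ne_zero one_ne_zero).symm
    _ ≤ ∑' x : S, ENNReal.ofReal ((ψ x / (x : ℝ)) ^ s * ((x:ℕ).totient : ℝ)) := by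
        apply ENNReal.tsum_le_tsum
        intro x
        exact ENNReal.one_le_ofReal.mpr (hN x x.2.2)
    _ ≤ _ := ENNReal.tsum_mono_subtype
        (fun n : ℕ => ENNReal.ofReal ((ψ n / (n:ℝ)) ^ s * (n.totient : ℝ)))
        (show S ⊆ Q from Set.inter_subset_left)
end
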